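/- If nonnegative reals V, V̂, ε satisfy V ≤ V̂ + √(2Vε) + (2/3)ε, then V ≤ V̂ + √(2V̂ε) + 5ε. -/

import Mathlib

/-!
Put `x = √V`, `p = √(2ε)` and `B = V̂ + (2/3)ε`, so that the hypothesis reads `x² ≤ B + p x`.
Solving this quadratic inequality gives `x ≤ p + √B`, hence `V = x² ≤ B + p x ≤ B + p² + p √B`.
Splitting `√B ≤ √V̂ + √((2/3)ε)` turns `p √B` into `√(2 V̂ ε)` plus a term that AM-GM bounds by
`(4/3)ε`, and the constants add up to `2/3 + 2 + 4/3 < 5`.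
-/

namespace Real

theorem sqrt_add_le_add_sqrt {a b : ℝ} (ha : 0 ≤ a) (hb : 0 ≤ b) : √(a + b) ≤ √a + √b := by
  rw [sqrt_le_left (by positivity)]
  nlinarith [sq_sqrt ha, sq_sqrt hb, mul_nonneg (sqrt_nonneg a) (sqrt_nonneg b)]

theorem le_add_sqrt_of_sq_le_add_mul {x p B : ℝ} (hp : 0 ≤ p) (hB : 0 ≤ B)
    (h : x ^ 2 ≤ B + p * x) : x ≤ p + √B := by
  by_contra! hlt
  have hsqrt : 0 ≤ √B := sqrt_nonneg B
  nlinarith [sq_sqrt hB]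

theorem sq_le_of_sq_le_add_mul {x p B : ℝ} (hp : 0 ≤ p) (hB : 0 ≤ B)
    (h : x ^ 2 ≤ B + p * x) : x ^ 2 ≤ B + p ^ 2 + p * √B := by
  nlinarith [mul_le_mul_of_nonneg_left (le_add_sqrt_of_sq_le_add_mul hp hB h) hp]

end Real

open Real

theorem quadratic_solve (V Vhat ε : ℝ) (hV : 0 ≤ V) (hVhat : 0 ≤ Vhat) (hε : 0 ≤ ε)
    (h : V ≤ Vhat + Real.sqrt (2 * V * ε) + (2/3) * ε) :
    V ≤ Vhat + Real.sqrt (2 * Vhat * ε) + 5 * ε := by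
  set p := √(2 * ε)
  have hp : 0 ≤ p := sqrt_nonneg _
  have hp2 : p ^ 2 = 2 * ε := sq_sqrt (by positivity)
  have hsplit : ∀ W, 0 ≤ W → √(2 * W * ε) = p * √W := fun W hW => by
    rw [mul_right_comm, sqrt_mul (by positivity), mul_comm]
  have hquad : √V ^ 2 ≤ (Vhat + 2 / 3 * ε) + p * √V := by
    rw [sq_sqrt hV, ← hsplit V hV]; linarith
  have hV_le := sq_le_of_sq_le_add_mul hp (by positivity) hquad
  rw [sq_sqrt hV] at hV_le
  have hsqrtB := sqrt_add_le_add_sqrt hVhat (show 0 ≤ 2 / 3 * ε by positivity)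
  have hamgm : p * √(2 / 3 * ε) ≤ 4 / 3 * ε := by
    nlinarith [sq_nonneg (p - √(2 / 3 * ε)), sq_sqrt (show 0 ≤ 2 / 3 * ε by positivity)]
  rw [hsplit Vhat hVhat]
  nlinarith [mul_le_mul_of_nonneg_left hsqrtB hp]
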